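/- arXiv:1412.1517 — 3 statements merged into one kernel-verified Lean document; each statement's English description precedes it below -/
import Mathlib

section
/- Let S be a metric semigroup satisfying Reiter's condition. Then S is amenable, i.e. there exists a norm-one positive linear functional φ : LUC(S) → ℂ satisfying φ(δ_a * f) = φ(f) for all a ∈ S and all f ∈ LUC(S). -/
open MeasureTheory BoundedContinuousFunction Filter Topology
open scoped ENNReal

/-- The total variation norm `‖μ - ν‖` of the difference of two (finite) measures. -/
noncomputable def tvDist {α : Type*} [MeasurableSpace α] (μ ν : Measure α) : ℝ≥0∞ :=
  (⨆ (E : Set α) (_ : MeasurableSet E), (μ E - ν E)) +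
    ⨆ (E : Set α) (_ : MeasurableSet E), (ν E - μ E)

/-- The left translate `δ_a * f` of a bounded continuous function `f`,
`(δ_a * f)(x) = f (a * x)`. -/
noncomputable def lTrans {S : Type*} [Semigroup S] [MetricSpace S] [ContinuousMul S]
    (a : S) (f : S →ᵇ ℂ) : S →ᵇ ℂ :=
  f.compContinuous ⟨fun x => a * x, continuous_const.mul continuous_id⟩

/-- `LUC S` is the space of bounded (left) uniformly continuous functions on `S`. -/
noncomputable def LUC (S : Type*) [Semigroup S] [MetricSpace S] [ContinuousMul S] :
    Submodule ℂ (S →ᵇ ℂ) where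
  carrier := {f | Continuous fun a : S => lTrans a f}
  add_mem' := by
    intro f g hf hg
    show Continuous fun a : S => lTrans a (f + g)
    have h : (fun a : S => lTrans a (f + g)) = fun a : S => lTrans a f + lTrans a g := by
      funext a; ext x; simp [lTrans]
    rw [h]; exact hf.add hg
  zero_mem' := by
    show Continuous fun a : S => lTrans a (0 : S →ᵇ ℂ)
    have h : (fun a : S => lTrans a (0 : S →ᵇ ℂ)) = fun _ => (0 : S →ᵇ ℂ) := by
      funext a; ext x; simp [lTrans]
    rw [h]; exact continuous_const
  smul_mem' := by
    intro c f hf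
    show Continuous fun a : S => lTrans a (c • f)
    have h : (fun a : S => lTrans a (c • f)) = fun a : S => c • lTrans a f := by
      funext a; ext x; simp [lTrans]
    rw [h]; exact hf.const_smul c

/-- The left translate `δ_a * f` of an element of `LUC S`, as an element of `LUC S`. -/
noncomputable def lTransL {S : Type*} [Semigroup S] [MetricSpace S] [ContinuousMul S]
    (a : S) (f : LUC S) : LUC S :=
  ⟨lTrans a f.1, by
    show Continuous fun b : S => lTrans b (lTrans a f.1)
    have h : (fun b : S => lTrans b (lTrans a f.1)) = fun b : S => lTrans (a * b) f.1 := by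
      funext b; ext x; simp [lTrans, mul_assoc]
    rw [h]; exact f.2.comp (continuous_mul_left a)⟩

/-- Reiter's condition for a topological semigroup: for every `ε > 0` and compact `K ⊆ S`
there is a compactly supported Borel probability measure `θ` on `S` with
`‖θ - δ_s * θ‖ < ε` for all `s ∈ K`. -/
def ReiterCond (S : Type*) [Semigroup S] [MetricSpace S] [ContinuousMul S]
    [MeasurableSpace S] : Prop :=
  ∀ ε : ℝ, 0 < ε → ∀ K : Set S, IsCompact K →
    ∃ θ : Measure S, IsProbabilityMeasure θ ∧ (∃ C : Set S, IsCompact C ∧ θ Cᶜ = 0) ∧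
      ∀ s ∈ K, tvDist θ (Measure.map (fun y => s * y) θ) < ENNReal.ofReal ε

/-! Integration against the Reiter measures gives states on `LUC S`, and by Banach–Alaoglu they
have a weak-* cluster point `φ`, again a state. Two probability measures at total variation
distance `t` integrate a function bounded by `c` to values at most `4 c t` apart (layer cake,
applied to real and imaginary parts), so `∫ δ_a * f dθ - ∫ f dθ → 0` along the Reiter net and `φ`
is left invariant. -/

open Set

section TotalVariation

variable {α : Type*} [MeasurableSpace α] {μ ν : Measure α}

lemma measure_le_add_iSup_sub {E : Set α} (hE : MeasurableSet E) :
    μ E ≤ ν E + ⨆ (F : Set α) (_ : MeasurableSet F), (μ F - ν F) :=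
  le_add_tsub.trans (add_le_add le_rfl (le_iSup₂ (f := fun F (_ : MeasurableSet F) => μ F - ν F)
    E hE))

lemma lintegral_ofReal_le_add_mul_iSup_sub {g : α → ℝ} (hg : Measurable g) (hg0 : 0 ≤ g)
    {M : ℝ} (hgM : ∀ x, g x ≤ M) :
    ∫⁻ x, ENNReal.ofReal (g x) ∂μ ≤ ∫⁻ x, ENNReal.ofReal (g x) ∂ν +
      ENNReal.ofReal M * ⨆ (E : Set α) (_ : MeasurableSet E), (μ E - ν E) := by
  set D := ⨆ (E : Set α) (_ : MeasurableSet E), (μ E - ν E)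
  rw [lintegral_eq_lintegral_meas_lt μ (ae_of_all _ hg0) hg.aemeasurable,
    lintegral_eq_lintegral_meas_lt ν (ae_of_all _ hg0) hg.aemeasurable]
  -- The superlevel sets `{t < g}` are empty beyond `M`, so only `t ∈ (0, M]` contributes.
  have hlevel : ∀ t ∈ Ioi (0 : ℝ),
      μ {x | t < g x} ≤ ν {x | t < g x} + (Ioc 0 M).indicator (fun _ => D) t := by
    intro t ht
    by_cases htM : t ≤ M
    · rw [indicator_of_mem (show t ∈ Ioc 0 M from ⟨ht, htM⟩)]
      exact measure_le_add_iSup_sub (measurableSet_lt measurable_const hg)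
    · have hempty : {x | t < g x} = ∅ :=
        eq_empty_of_forall_notMem fun x hx => htM ((le_of_lt hx).trans (hgM x))
      simp [hempty]
  calc ∫⁻ t in Ioi 0, μ {x | t < g x}
      ≤ ∫⁻ t in Ioi 0, (ν {x | t < g x} + (Ioc 0 M).indicator (fun _ => D) t) :=
        setLIntegral_mono' measurableSet_Ioi hlevel
    _ = (∫⁻ t in Ioi 0, ν {x | t < g x}) + ENNReal.ofReal M * D := by
        rw [lintegral_add_right _ (measurable_const.indicator measurableSet_Ioc),
          lintegral_indicator measurableSet_Ioc, setLIntegral_const,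
          Measure.restrict_apply measurableSet_Ioc, inter_eq_left.2 Ioc_subset_Ioi_self,
          Real.volume_Ioc, sub_zero, mul_comm]

lemma integral_sub_integral_le_of_abs_le [IsProbabilityMeasure μ] [IsProbabilityMeasure ν]
    {g : α → ℝ} (hg : Measurable g) {c : ℝ} (hc : 0 ≤ c) (hgc : ∀ x, |g x| ≤ c)
    {t : ℝ} (ht : 0 ≤ t)
    (hD : ⨆ (E : Set α) (_ : MeasurableSet E), (μ E - ν E) ≤ ENNReal.ofReal t) :
    ∫ x, g x ∂μ - ∫ x, g x ∂ν ≤ 2 * c * t := by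
  set h : α → ℝ := fun x => g x + c
  have hh0 : 0 ≤ h := fun x => show 0 ≤ g x + c by linarith [(abs_le.1 (hgc x)).1]
  have hh2c : ∀ x, h x ≤ 2 * c := fun x =>
    show g x + c ≤ 2 * c by linarith [(abs_le.1 (hgc x)).2]
  have hintegral : ∀ ρ : Measure α, IsProbabilityMeasure ρ →
      ∫ x, g x ∂ρ + c = (∫⁻ x, ENNReal.ofReal (h x) ∂ρ).toReal := fun ρ _ => by
    have hgi : Integrable g ρ :=
      (integrable_const c).mono' hg.aestronglyMeasurable (ae_of_all _ hgc)
    rw [← integral_eq_lintegral_of_nonneg_ae (ae_of_all _ hh0)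
      (hg.add_const c).aestronglyMeasurable, integral_add hgi (integrable_const c)]
    simp
  have hfin : ∫⁻ x, ENNReal.ofReal (h x) ∂ν ≠ ∞ :=
    ne_top_of_le_ne_top
      (by simp [lintegral_const, ENNReal.mul_eq_top] : ∫⁻ _, ENNReal.ofReal (2 * c) ∂ν ≠ ∞)
      (lintegral_mono fun x => ENNReal.ofReal_le_ofReal (hh2c x))
  have hle : ∫⁻ x, ENNReal.ofReal (h x) ∂μ ≤
      ∫⁻ x, ENNReal.ofReal (h x) ∂ν + ENNReal.ofReal (2 * c * t) := by
    refine (lintegral_ofReal_le_add_mul_iSup_sub (ν := ν) (hg.add_const c) hh0 hh2c).trans ?_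
    rw [ENNReal.ofReal_mul (p := 2 * c) (q := t) (by positivity)]
    gcongr
  have := ENNReal.toReal_mono (ENNReal.add_ne_top.2 ⟨hfin, ENNReal.ofReal_ne_top⟩) hle
  rw [ENNReal.toReal_add hfin ENNReal.ofReal_ne_top, ENNReal.toReal_ofReal (by positivity),
    ← hintegral μ inferInstance, ← hintegral ν inferInstance] at this
  linarith

lemma abs_integral_sub_integral_le_of_tvDist_le [IsProbabilityMeasure μ]
    [IsProbabilityMeasure ν] {g : α → ℝ} (hg : Measurable g) {c : ℝ} (hc : 0 ≤ c)
    (hgc : ∀ x, |g x| ≤ c) {t : ℝ} (ht : 0 ≤ t) (htv : tvDist μ ν ≤ ENNReal.ofReal t) :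
    |∫ x, g x ∂μ - ∫ x, g x ∂ν| ≤ 2 * c * t :=
  abs_sub_le_iff.2
    ⟨integral_sub_integral_le_of_abs_le hg hc hgc ht (le_self_add.trans htv),
      integral_sub_integral_le_of_abs_le hg hc hgc ht (le_add_self.trans htv)⟩

lemma norm_integral_sub_integral_le_of_tvDist_le [IsProbabilityMeasure μ]
    [IsProbabilityMeasure ν] {f : α → ℂ} (hf : Measurable f) {c : ℝ} (hc : 0 ≤ c)
    (hfc : ∀ x, ‖f x‖ ≤ c) {t : ℝ} (ht : 0 ≤ t) (htv : tvDist μ ν ≤ ENNReal.ofReal t) :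
    ‖∫ x, f x ∂μ - ∫ x, f x ∂ν‖ ≤ 4 * c * t := by
  have hparts : ∀ ρ : Measure α, IsProbabilityMeasure ρ →
      (∫ x, f x ∂ρ).re = ∫ x, (f x).re ∂ρ ∧ (∫ x, f x ∂ρ).im = ∫ x, (f x).im ∂ρ := by
    intro ρ _
    have hfi : Integrable f ρ :=
      (integrable_const c).mono' hf.aestronglyMeasurable (ae_of_all _ hfc)
    exact ⟨(integral_re hfi).symm, (integral_im hfi).symm⟩
  have hre : |(∫ x, f x ∂μ - ∫ x, f x ∂ν).re| ≤ 2 * c * t := by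
    rw [Complex.sub_re, (hparts μ inferInstance).1, (hparts ν inferInstance).1]
    exact abs_integral_sub_integral_le_of_tvDist_le (Complex.measurable_re.comp hf) hc
      (fun x => (Complex.abs_re_le_norm _).trans (hfc x)) ht htv
  have him : |(∫ x, f x ∂μ - ∫ x, f x ∂ν).im| ≤ 2 * c * t := by
    rw [Complex.sub_im, (hparts μ inferInstance).2, (hparts ν inferInstance).2]
    exact abs_integral_sub_integral_le_of_tvDist_le (Complex.measurable_im.comp hf) hc
      (fun x => (Complex.abs_im_le_norm _).trans (hfc x)) ht htv
  calc ‖∫ x, f x ∂μ - ∫ x, f x ∂ν‖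
      ≤ |(∫ x, f x ∂μ - ∫ x, f x ∂ν).re| + |(∫ x, f x ∂μ - ∫ x, f x ∂ν).im| :=
        Complex.norm_le_abs_re_add_abs_im _
    _ ≤ 4 * c * t := by linarith

end TotalVariation

lemma StrongDual.exists_ultrafilter_tendsto_of_norm_le {𝕜 E ι : Type*}
    [NontriviallyNormedField 𝕜] [ProperSpace 𝕜] [SeminormedAddCommGroup E] [NormedSpace 𝕜 E]
    (l : Filter ι) [l.NeBot] (ψ : ι → StrongDual 𝕜 E) {r : ℝ} (hψ : ∀ i, ‖ψ i‖ ≤ r) :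
    ∃ U : Ultrafilter ι, ↑U ≤ l ∧ ∃ φ : StrongDual 𝕜 E, ‖φ‖ ≤ r ∧
      ∀ x, Tendsto (fun i => ψ i x) U (𝓝 (φ x)) := by
  set ball : Set (WeakDual 𝕜 E) := WeakDual.toStrongDual ⁻¹' Metric.closedBall 0 r
  let U := Ultrafilter.of l
  have hU : Tendsto (fun i => StrongDual.toWeakDual (ψ i)) U (𝓟 ball) :=
    tendsto_principal.2 (Eventually.of_forall fun i => mem_closedBall_zero_iff.2 (hψ i))
  obtain ⟨φ, hφ, hlim⟩ := (WeakDual.isCompact_closedBall 0 r).ultrafilter_le_nhds (U.map _) hU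
  exact ⟨U, Ultrafilter.of_le l, WeakDual.toStrongDual φ, mem_closedBall_zero_iff.1 hφ,
    fun x => ((WeakDual.eval_continuous x).tendsto φ).comp hlim⟩

section LUC

variable {S : Type*} [Semigroup S] [MetricSpace S] [ContinuousMul S]

lemma one_mem_LUC : (1 : S →ᵇ ℂ) ∈ LUC S := by
  have h : (fun a : S => lTrans a (1 : S →ᵇ ℂ)) = fun _ => 1 := by
    funext a; ext x; simp [lTrans]
  show Continuous fun a : S => lTrans a 1
  rw [h]
  exact continuous_const

variable [MeasurableSpace S] [OpensMeasurableSpace S]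

noncomputable def integralLUC (μ : Measure S) [IsProbabilityMeasure μ] : StrongDual ℂ (LUC S) :=
  LinearMap.mkContinuous
    { toFun := fun f => ∫ x, (f : S →ᵇ ℂ) x ∂μ
      map_add' := fun f g => integral_add ((f : S →ᵇ ℂ).integrable μ) ((g : S →ᵇ ℂ).integrable μ)
      map_smul' := fun c f => integral_smul c _ }
    1 fun f => by rw [one_mul]; exact (f : S →ᵇ ℂ).norm_integral_le_norm μ

variable (μ : Measure S) [IsProbabilityMeasure μ]

lemma integralLUC_apply (f : LUC S) : integralLUC μ f = ∫ x, (f : S →ᵇ ℂ) x ∂μ := rfl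

lemma norm_integralLUC_le : ‖integralLUC μ‖ ≤ 1 :=
  LinearMap.mkContinuous_norm_le _ zero_le_one _

lemma integralLUC_one : integralLUC μ ⟨1, one_mem_LUC⟩ = 1 := by
  simp [integralLUC_apply]

open ComplexOrder in
lemma integralLUC_nonneg {f : LUC S} (hf : ∀ x, 0 ≤ (f : S →ᵇ ℂ) x) : 0 ≤ integralLUC μ f :=
  integral_nonneg hf

lemma norm_integralLUC_lTransL_sub_le [BorelSpace S] (a : S) (f : LUC S) {t : ℝ} (ht : 0 ≤ t)
    (hμ : tvDist μ (μ.map (a * ·)) ≤ ENNReal.ofReal t) :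
    ‖integralLUC μ (lTransL a f) - integralLUC μ f‖ ≤ 4 * ‖(f : S →ᵇ ℂ)‖ * t := by
  have hmul : Measurable (a * · : S → S) := (continuous_const_mul a).measurable
  have : IsProbabilityMeasure (μ.map (a * ·)) :=
    Measure.isProbabilityMeasure_map hmul.aemeasurable
  have hmap : ∫ x, (f : S →ᵇ ℂ) x ∂(μ.map (a * ·)) = integralLUC μ (lTransL a f) :=
    integral_map hmul.aemeasurable (f : S →ᵇ ℂ).continuous.aestronglyMeasurable
  rw [norm_sub_rev, integralLUC_apply, ← hmap]
  exact norm_integral_sub_integral_le_of_tvDist_le (f : S →ᵇ ℂ).continuous.measurable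
    (norm_nonneg _) (f : S →ᵇ ℂ).norm_coe_le_norm ht hμ

end LUC

open ComplexOrder in
lemma Complex.zero_le_iff_exists_ofReal {z : ℂ} : 0 ≤ z ↔ ∃ r : ℝ, 0 ≤ r ∧ z = r := by
  rw [RCLike.nonneg_iff_exists_ofReal]
  exact ⟨fun ⟨r, hr, h⟩ => ⟨r, hr, h.symm⟩, fun ⟨r, hr, h⟩ => ⟨r, hr, h.symm⟩⟩

section Reiter

open TopologicalSpace

variable {S : Type*} [Semigroup S] [MetricSpace S] [ContinuousMul S] [MeasurableSpace S]

lemma ReiterCond.exists_probabilityMeasure (hR : ReiterCond S) :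
    ∃ θ : ℕ × Compacts S → ProbabilityMeasure S, ∀ i, ∀ s ∈ i.2,
      tvDist (θ i : Measure S) ((θ i : Measure S).map (s * ·)) ≤
        ENNReal.ofReal ((i.1 : ℝ) + 1)⁻¹ := by
  choose θ hθ _ hθtv using fun i : ℕ × Compacts S =>
    hR ((i.1 : ℝ) + 1)⁻¹ (by positivity) i.2 i.2.isCompact
  exact ⟨fun i => ⟨θ i, hθ i⟩, fun i s hs => (hθtv i s hs).le⟩

lemma tendsto_integralLUC_lTransL_sub [BorelSpace S] {θ : ℕ × Compacts S → ProbabilityMeasure S}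
    (hθ : ∀ i, ∀ s ∈ i.2, tvDist (θ i : Measure S) ((θ i : Measure S).map (s * ·)) ≤
      ENNReal.ofReal ((i.1 : ℝ) + 1)⁻¹) (a : S) (f : LUC S) :
    Tendsto (fun i => integralLUC (θ i : Measure S) (lTransL a f) -
      integralLUC (θ i : Measure S) f) atTop (𝓝 0) := by
  have hfst : Tendsto (fun i : ℕ × Compacts S => i.1) atTop atTop :=
    tendsto_atTop_atTop_of_monotone monotone_fst fun n => ⟨(n, ⊥), le_rfl⟩
  have hbound : Tendsto (fun i : ℕ × Compacts S => 4 * ‖(f : S →ᵇ ℂ)‖ * ((i.1 : ℝ) + 1)⁻¹)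
      atTop (𝓝 0) := by
    simpa using
      (tendsto_one_div_add_atTop_nhds_zero_nat.comp hfst).const_mul (4 * ‖(f : S →ᵇ ℂ)‖)
  refine squeeze_zero_norm' ?_ hbound
  filter_upwards [eventually_ge_atTop ((0, {a}) : ℕ × Compacts S)] with i hi
  exact norm_integralLUC_lTransL_sub_le _ a f (by positivity) (hθ i a (hi.2 rfl))

end Reiter

/-- **Reiter's condition implies amenability for metric semigroups.** -/
theorem reiter_implies_amenable_metric_semigroup
    {S : Type*} [Semigroup S] [MetricSpace S] [ContinuousMul S]
    [MeasurableSpace S] [BorelSpace S]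
    (hR : ReiterCond S) :
    ∃ φ : LUC S →L[ℂ] ℂ, ‖φ‖ = 1 ∧
      (∀ f : LUC S, (∀ x : S, ∃ r : ℝ, 0 ≤ r ∧ (f : S →ᵇ ℂ) x = r) →
        ∃ r : ℝ, 0 ≤ r ∧ φ f = r) ∧
      (∀ (a : S) (f : LUC S), φ (lTransL a f) = φ f) := by
  obtain ⟨θ, hθ⟩ := hR.exists_probabilityMeasure
  obtain ⟨U, hU, φ, hφ, hlim⟩ := StrongDual.exists_ultrafilter_tendsto_of_norm_le atTop
    (fun i => integralLUC (θ i : Measure S)) fun i => norm_integralLUC_le _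
  refine ⟨φ, ?_, fun f hf => ?_, fun a f => ?_⟩
  · have hφ1 : φ ⟨1, one_mem_LUC⟩ = 1 :=
      tendsto_nhds_unique (hlim _) (by simp only [integralLUC_one]; exact tendsto_const_nhds)
    refine le_antisymm hφ ?_
    calc (1 : ℝ) = ‖φ ⟨1, one_mem_LUC⟩‖ := by rw [hφ1, norm_one]
      _ ≤ ‖φ‖ * ‖(1 : S →ᵇ ℂ)‖ := φ.le_opNorm _
      _ ≤ ‖φ‖ := mul_le_of_le_one_right (norm_nonneg _) ((norm_const_le 1).trans_eq norm_one)
  · open ComplexOrder in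
    exact Complex.zero_le_iff_exists_ofReal.1 <| isClosed_Ici.mem_of_tendsto (hlim f) <|
      Eventually.of_forall fun i =>
        integralLUC_nonneg _ fun x => Complex.zero_le_iff_exists_ofReal.2 (hf x)
  · have hdiff := ((tendsto_integralLUC_lTransL_sub hθ a f).mono_left hU).add (hlim f)
    simp only [sub_add_cancel, zero_add] at hdiff
    exact tendsto_nhds_unique (hlim _) hdiff
end

section
/- Let S be a discrete semigroup with identity and let π be a non-degenerate probability measure on S. Then every bounded π-harmonic function f : S → ℂ satisfies f(ax) = f(x) for all x ∈ S and all a in the center of S (i.e. all a ∈ S with as = sa for every s ∈ S). -/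
/-!
Let `a` be central and `f` real-valued (vector-valued `f` reduce to this through continuous
linear functionals). The difference `w x = f (a * x) - f x` is again bounded and harmonic, and
since `π` is a probability measure, `w x` being close to `M = sup w` forces `w (x * s)` to be close
to `M` for every `s` in the support of `π`, with a loss factor `π s`; by non-degeneracy the same
holds, with some factor `c > 0`, for `s = a`. Starting from a point where `w` is close enough to
`M`, the increments `w (x * a ^ k)` for `k < n` are all at least `M / 2`, and since `a` is central
they telescope to `f (x * a ^ n) - f x`, which is bounded. Hence `M ≤ 0`, i.e.
`f (a * x) ≤ f x`; applied to `-f` this gives equality.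
-/

open Finset

section

variable {S E : Type*} [NormedAddCommGroup E] [NormedSpace ℝ E]

def IsHarmonic [Mul S] (π : S → ℝ) (f : S → E) : Prop :=
  ∀ x, HasSum (fun y ↦ π y • f (x * y)) (f x)

namespace IsHarmonic

section Mul

variable [Mul S] {π : S → ℝ}

theorem of_tsum_eq [CompleteSpace E] (hpos : ∀ s, 0 ≤ π s) (hπ : Summable π) {f : S → E}
    {C : ℝ} (hb : ∀ x, ‖f x‖ ≤ C) (hf : ∀ x, f x = ∑' y, π y • f (x * y)) :
    IsHarmonic π f := by
  intro x
  rw [hf x]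
  refine (Summable.of_norm_bounded (hπ.mul_left C) fun y ↦ ?_).hasSum
  rw [norm_smul, Real.norm_of_nonneg (hpos y), mul_comm]
  exact mul_le_mul_of_nonneg_right (hb _) (hpos y)

theorem sub {f g : S → E} (hf : IsHarmonic π f) (hg : IsHarmonic π g) :
    IsHarmonic π (f - g) := fun x ↦ by
  simpa only [Pi.sub_apply, smul_sub] using (hf x).sub (hg x)

theorem neg {f : S → E} (hf : IsHarmonic π f) : IsHarmonic π (-f) := fun x ↦ by
  simpa only [Pi.neg_apply, smul_neg] using (hf x).neg

theorem map {F : Type*} [NormedAddCommGroup F] [NormedSpace ℝ F] {f : S → E}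
    (hf : IsHarmonic π f) (ℓ : E →L[ℝ] F) : IsHarmonic π (ℓ ∘ f) := fun x ↦ by
  simpa only [Function.comp_apply, map_smul] using (hf x).mapL ℓ

theorem mul_sub_le_sub (hpos : ∀ s, 0 ≤ π s) (hsum : HasSum π 1) {u : S → ℝ}
    (hu : IsHarmonic π u) {M : ℝ} (hM : ∀ x, u x ≤ M) (x s : S) :
    π s * (M - u (x * s)) ≤ M - u x := by
  have h : HasSum (fun y ↦ π y * (M - u (x * y))) (M - u x) := by
    simpa only [mul_sub, one_mul, smul_eq_mul] using (hsum.mul_right M).sub (hu x)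
  exact le_hasSum h s fun y _ ↦ mul_nonneg (hpos y) (sub_nonneg.2 (hM _))

end Mul

theorem comp_mul_left [Semigroup S] {π : S → ℝ} {f : S → E} (hf : IsHarmonic π f) (a : S) :
    IsHarmonic π (fun x ↦ f (a * x)) := fun x ↦ by
  simpa only [mul_assoc] using hf (a * x)

theorem exists_mul_sub_le_sub_of_mem_closure [Semigroup S] {π : S → ℝ} (hpos : ∀ s, 0 ≤ π s)
    (hsum : HasSum π 1) {u : S → ℝ} (hu : IsHarmonic π u) {M : ℝ} (hM : ∀ x, u x ≤ M) {s : S}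
    (hs : s ∈ Subsemigroup.closure {s | 0 < π s}) :
    ∃ c, 0 < c ∧ c ≤ 1 ∧ ∀ x, c * (M - u (x * s)) ≤ M - u x := by
  induction hs using Subsemigroup.closure_induction with
  | mem t ht =>
    exact ⟨π t, ht, le_hasSum hsum t fun y _ ↦ hpos y, fun x ↦ hu.mul_sub_le_sub hpos hsum hM x t⟩
  | mul s t _ _ ihs iht =>
    obtain ⟨c, hc0, hc1, hc⟩ := ihs
    obtain ⟨d, hd0, hd1, hd⟩ := iht
    refine ⟨c * d, mul_pos hc0 hd0, mul_le_one₀ hc1 hd0.le hd1, fun x ↦ ?_⟩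
    calc c * d * (M - u (x * (s * t))) = c * (d * (M - u (x * s * t))) := by
          rw [mul_assoc, mul_assoc x]
      _ ≤ c * (M - u (x * s)) := by gcongr; exact hd _
      _ ≤ M - u x := hc x

end IsHarmonic

section Monoid

variable [Monoid S]

theorem pow_mul_sub_le_sub {u : S → ℝ} {M c : ℝ} {a : S} (hc : 0 ≤ c)
    (h : ∀ x, c * (M - u (x * a)) ≤ M - u x) (x : S) (n : ℕ) :
    c ^ n * (M - u (x * a ^ n)) ≤ M - u x := by
  induction n with
  | zero => simp
  | succ n ih =>
    calc c ^ (n + 1) * (M - u (x * a ^ (n + 1))) = c ^ n * (c * (M - u (x * a ^ n * a))) := by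
          rw [pow_succ, pow_succ, mul_assoc, mul_assoc]
      _ ≤ c ^ n * (M - u (x * a ^ n)) := by gcongr; exact h _
      _ ≤ M - u x := ih

theorem sum_range_sub_mul_pow {G : Type*} [AddCommGroup G] (u : S → G) {a : S}
    (ha : ∀ s, a * s = s * a) (x : S) (n : ℕ) :
    ∑ k ∈ range n, (u (a * (x * a ^ k)) - u (x * a ^ k)) = u (x * a ^ n) - u x := by
  have h : ∀ k, u (a * (x * a ^ k)) = u (x * a ^ (k + 1)) := fun k ↦ by
    rw [ha, mul_assoc, ← pow_succ]
  simpa only [h, pow_zero, mul_one] using sum_range_sub (fun k ↦ u (x * a ^ k)) n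

namespace IsHarmonic

variable {π : S → ℝ}

theorem apply_mul_le (hpos : ∀ s, 0 ≤ π s) (hsum : HasSum π 1) {u : S → ℝ}
    (hu : IsHarmonic π u) {C : ℝ} (hC : ∀ x, |u x| ≤ C) {a : S}
    (ha : a ∈ Subsemigroup.closure {s | 0 < π s}) (hcomm : ∀ s, a * s = s * a) (x : S) :
    u (a * x) ≤ u x := by
  set w : S → ℝ := fun x ↦ u (a * x) - u x
  have hw : IsHarmonic π w := (hu.comp_mul_left a).sub hu
  have hwC : ∀ x, w x ≤ 2 * C := fun x ↦ by
    linarith [(abs_le.1 (hC (a * x))).2, (abs_le.1 (hC x)).1]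
  set M := ⨆ x, w x
  have hwM : ∀ x, w x ≤ M := le_ciSup ⟨2 * C, Set.forall_mem_range.2 hwC⟩
  suffices M ≤ 0 by linarith [hwM x]
  by_contra! hM
  obtain ⟨c, hc0, hc1, hc⟩ := hw.exists_mul_sub_le_sub_of_mem_closure hpos hsum hwM ha
  obtain ⟨n, hn⟩ := exists_nat_gt (4 * C / M)
  obtain ⟨x, hx⟩ : ∃ x, M - c ^ n * (M / 2) < w x :=
    exists_lt_of_lt_ciSup (by linarith [mul_pos (pow_pos hc0 n) (half_pos hM)])
  have hclose : ∀ k ≤ n, M / 2 ≤ w (x * a ^ k) := fun k hk ↦ by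
    have hck : c ^ n ≤ c ^ k := pow_le_pow_of_le_one hc0.le hc1 hk
    have h : c ^ k * (M - w (x * a ^ k)) < c ^ k * (M / 2) := by
      nlinarith [pow_mul_sub_le_sub hc0.le hc x k]
    linarith [lt_of_mul_lt_mul_left h (pow_nonneg hc0.le k)]
  have hgrowth : n * (M / 2) ≤ u (x * a ^ n) - u x := by
    rw [← sum_range_sub_mul_pow u hcomm]
    simpa only [card_range, nsmul_eq_mul] using
      card_nsmul_le_sum (range n) _ (M / 2) fun k hk ↦ hclose k (mem_range.1 hk).le
  rw [div_lt_iff₀ hM] at hn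
  linarith [(abs_le.1 (hC (x * a ^ n))).2, (abs_le.1 (hC x)).1]

theorem apply_mul_eq (hpos : ∀ s, 0 ≤ π s) (hsum : HasSum π 1) {f : S → E}
    (hf : IsHarmonic π f) {C : ℝ} (hC : ∀ x, ‖f x‖ ≤ C) {a : S}
    (ha : a ∈ Subsemigroup.closure {s | 0 < π s}) (hcomm : ∀ s, a * s = s * a) (x : S) :
    f (a * x) = f x := by
  refine (SeparatingDual.eq_iff_forall_dual_eq (R := ℝ)).2 fun ℓ ↦ ?_
  have hℓ := hf.map ℓ
  have hb : ∀ y, |(ℓ ∘ f) y| ≤ ‖ℓ‖ * C := fun y ↦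
    (ℓ.le_opNorm (f y)).trans (mul_le_mul_of_nonneg_left (hC y) (norm_nonneg ℓ))
  exact le_antisymm (hℓ.apply_mul_le hpos hsum hb ha hcomm x)
    (neg_le_neg_iff.1 (hℓ.neg.apply_mul_le hpos hsum (by simpa using hb) ha hcomm x))

end IsHarmonic

end Monoid

end

/-- **Harmonic functions are invariant under central translations.**
Let `S` be a discrete semigroup with identity, `π` a non-degenerate probability measure
on `S` (i.e. `π ≥ 0`, `Σ π = 1` and the support of `π` generates `S` as a semigroup).
Then every bounded `π`-harmonic `f : S → ℂ` satisfies `f (a * x) = f x` for all `x ∈ S`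
and all `a` in the center of `S`. -/
theorem harmonic_central_invariance
    {S : Type*} [Monoid S]
    (π : S → ℝ) (hpos : ∀ s, 0 ≤ π s) (hsum : HasSum π 1)
    (hnd : Subsemigroup.closure {s : S | 0 < π s} = ⊤)
    (f : S → ℂ) (hb : ∃ C : ℝ, ∀ x, ‖f x‖ ≤ C)
    (hharm : ∀ x : S, f x = ∑' y : S, f (x * y) * (π y : ℂ)) :
    ∀ a : S, (∀ s : S, a * s = s * a) → ∀ x : S, f (a * x) = f x := by
  obtain ⟨C, hC⟩ := hb
  have hf : IsHarmonic π f := IsHarmonic.of_tsum_eq hpos hsum.summable hC fun x ↦ by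
    simpa only [Complex.real_smul, mul_comm] using hharm x
  exact fun a ha ↦ hf.apply_mul_eq hpos hsum hC (hnd ▸ Subsemigroup.mem_top a) ha
end

section
/- Let S be a metric semigroup and let π be a tight Borel probability measure on S. Then there exists a linear contractive projection P : LUC(S) → LUC(S) (i.e. P ∘ P = P and ‖P(f)‖_∞ ≤ ‖f‖_∞ for all f) whose range equals H_π(S), and which commutes with left translations: P(δ_a * f) = δ_a * P(f) for all a ∈ S and f ∈ LUC(S). -/
open MeasureTheory BoundedContinuousFunction Filter Topology
open scoped ENNReal

/-!
Let `T f (x) = ∫ f (x y) dπ(y)`. It is a contraction of the bounded continuous functions that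
commutes with left translations, and the `π`-harmonic functions are its fixed points. `P f` is
the pointwise limit of the Cesàro means `Aₙ f = n⁻¹ ∑_{k<n} Tᵏ f` along an ultrafilter finer
than `atTop`; such limits are linear, contractive and translation-equivariant, and they fix
every fixed point of `T`. For `f ∈ LUC(S)` the family `(Aₙ f)ₙ` is equicontinuous, so by Ascoli
the convergence is uniform on compact sets; tightness of `π` then lets the limit pass under the
integral, and since `T (Aₙ f) - Aₙ f = n⁻¹ (Tⁿ f - f) → 0`, `P f` is harmonic. Equicontinuity
also makes `P f` continuous, and equivariance together with contractivity put it in `LUC(S)`.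
-/

section CesaroMean

variable {𝕜 E : Type*} [RCLike 𝕜] [NormedAddCommGroup E] [NormedSpace 𝕜 E]

noncomputable def cesaroMean (T : E →L[𝕜] E) (n : ℕ) : E →L[𝕜] E :=
  (n : 𝕜)⁻¹ • ∑ k ∈ Finset.range n, T ^ k

theorem cesaroMean_apply (T : E →L[𝕜] E) (n : ℕ) (x : E) :
    cesaroMean T n x = birkhoffAverage 𝕜 T id n x := by
  simp [cesaroMean, birkhoffAverage, birkhoffSum]

theorem norm_birkhoffAverage_le {α : Type*} (f : α → α) (g : α → E) (n : ℕ) (x : α) {C : ℝ}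
    (hC : 0 ≤ C) (hg : ∀ k, ‖g (f^[k] x)‖ ≤ C) : ‖birkhoffAverage 𝕜 f g n x‖ ≤ C := by
  rcases n.eq_zero_or_pos with rfl | hn
  · simpa using hC
  calc ‖birkhoffAverage 𝕜 f g n x‖ ≤ (n : ℝ)⁻¹ * ∑ k ∈ Finset.range n, ‖g (f^[k] x)‖ := by
        rw [birkhoffAverage, birkhoffSum, norm_smul, norm_inv, RCLike.norm_natCast]
        gcongr
        exact norm_sum_le _ _
    _ ≤ (n : ℝ)⁻¹ * ∑ _k ∈ Finset.range n, C := by gcongr with k; exact hg k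
    _ = C := by simp [field]

theorem norm_iterate_apply_le {T : E →L[𝕜] E} (hT : ‖T‖ ≤ 1) (k : ℕ) (x : E) :
    ‖T^[k] x‖ ≤ ‖x‖ := by
  induction k with
  | zero => rfl
  | succ k ih =>
    rw [Function.iterate_succ_apply']
    exact (T.le_of_opNorm_le hT _).trans (by simpa using ih)

theorem norm_cesaroMean_apply_le {T : E →L[𝕜] E} (hT : ‖T‖ ≤ 1) (n : ℕ) (x : E) :
    ‖cesaroMean T n x‖ ≤ ‖x‖ := by
  rw [cesaroMean_apply]
  exact norm_birkhoffAverage_le _ _ _ _ (norm_nonneg x) (norm_iterate_apply_le hT · x)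

theorem Commute.cesaroMean_right {L T : E →L[𝕜] E} (h : Commute L T) (n : ℕ) :
    Commute L (cesaroMean T n) :=
  (Commute.sum_right _ _ _ fun k _ => h.pow_right k).smul_right _

theorem tendsto_cesaroMean_apply_sub {T : E →L[𝕜] E} (hT : ‖T‖ ≤ 1) (x : E) :
    Tendsto (fun n => T (cesaroMean T n x) - cesaroMean T n x) atTop (𝓝 0) := by
  have hcomm (n : ℕ) : T (cesaroMean T n x) = cesaroMean T n (T x) :=
    DFunLike.congr_fun ((Commute.refl T).cesaroMean_right n).eq x
  have hbdd : Bornology.IsBounded (Set.range (T^[·] x)) := by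
    refine (Metric.isBounded_closedBall (x := (0 : E)) (r := ‖x‖)).subset ?_
    rintro _ ⟨k, rfl⟩
    simpa using norm_iterate_apply_le hT k x
  refine (tendsto_birkhoffAverage_apply_sub_birkhoffAverage 𝕜 (g := id) hbdd).congr fun n => ?_
  rw [hcomm, cesaroMean_apply, cesaroMean_apply]

theorem cesaroMean_apply_eq_self {T : E →L[𝕜] E} {x : E} (hx : T x = x) {n : ℕ} (hn : n ≠ 0) :
    cesaroMean T n x = x := by
  rw [cesaroMean_apply]
  exact Function.IsFixedPt.birkhoffAverage_eq 𝕜 hx id (Nat.cast_ne_zero.2 hn)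

end CesaroMean

theorem Equicontinuous.tendstoUniformlyOn_of_tendsto {ι X α : Type*} [TopologicalSpace X]
    [UniformSpace α] {F : ι → X → α} {G : X → α} {l : Filter ι} (hF : Equicontinuous F)
    (hFG : Tendsto F l (𝓝 G)) {K : Set X} (hK : IsCompact K) : TendstoUniformlyOn F G l K := by
  have : CompactSpace K := isCompact_iff_compactSpace.mp hK
  rw [tendstoUniformlyOn_iff_tendstoUniformly_comp_coe]
  have hFK := (equicontinuous_restrict_iff F).2 (hF.equicontinuousOn K)
  refine UniformFun.tendsto_iff_tendstoUniformly.1 <| hFK.tendsto_uniformFun_iff_pi l _ |>.2 ?_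
  exact ((continuous_pi fun x : K => continuous_apply (x : X)).tendsto G).comp hFG

theorem tendsto_integral_of_tendstoUniformlyOn_isCompact {ι X E : Type*} [TopologicalSpace X]
    [T2Space X] [MeasurableSpace X] [OpensMeasurableSpace X] [NormedAddCommGroup E]
    [NormedSpace ℝ E] {μ : Measure X} [IsFiniteMeasure μ] (hμ : IsTightMeasureSet {μ})
    {l : Filter ι} {F : ι → X → E} {G : X → E} {C : ℝ}
    (hF : ∀ i, AEStronglyMeasurable (F i) μ) (hG : AEStronglyMeasurable G μ)
    (hFC : ∀ i x, ‖F i x‖ ≤ C) (hGC : ∀ x, ‖G x‖ ≤ C)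
    (hFG : ∀ K, IsCompact K → TendstoUniformlyOn F G l K) :
    Tendsto (fun i => ∫ x, F i x ∂μ) l (𝓝 (∫ x, G x ∂μ)) := by
  rw [Metric.tendsto_nhds]
  intro ε hε
  set M := 2 * |C| + 1
  have hM : 0 < M := by positivity
  obtain ⟨K, hK, hKμ⟩ := isTightMeasureSet_iff_exists_isCompact_measure_compl_le.1 hμ
    (ENNReal.ofReal (ε / (4 * M))) (ENNReal.ofReal_pos.2 (by positivity))
  replace hKμ : μ.real Kᶜ ≤ ε / (4 * M) :=
    ENNReal.toReal_le_of_le_ofReal (by positivity) (hKμ μ rfl)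
  set η := ε / (2 * (μ.real Set.univ + 1))
  have hη : 0 < η := by positivity
  filter_upwards [Metric.tendstoUniformlyOn_iff.1 (hFG K hK) η hη] with i hi
  have hbound (x : X) : ‖F i x - G x‖ ≤ η + Kᶜ.indicator (fun _ => M) x := by
    by_cases hx : x ∈ K
    · simpa [hx, dist_eq_norm', norm_sub_rev] using (hi x hx).le
    · rw [Set.indicator_of_mem (Set.mem_compl hx)]
      linarith [norm_sub_le (F i x) (G x), le_abs_self C, hFC i x, hGC x]
  have hMint : Integrable (Kᶜ.indicator fun _ => M) μ :=
    (integrable_const M).indicator hK.measurableSet.compl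
  rw [dist_eq_norm, ← integral_sub (.of_bound (hF i) C (.of_forall (hFC i)))
    (.of_bound hG C (.of_forall hGC))]
  calc ‖∫ x, F i x - G x ∂μ‖ ≤ ∫ x, η + Kᶜ.indicator (fun _ => M) x ∂μ :=
        norm_integral_le_of_norm_le ((integrable_const η).add hMint) (.of_forall hbound)
    _ = η * μ.real Set.univ + M * μ.real Kᶜ := by
        rw [integral_add (integrable_const η) hMint, integral_const,
          integral_indicator_const _ hK.measurableSet.compl]
        simp [smul_eq_mul, mul_comm]
    _ < ε := by
        have h1 : η * μ.real Set.univ < ε / 2 := by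
          rw [div_mul_eq_mul_div, div_lt_div_iff₀ (by positivity) (by positivity)]
          nlinarith [measureReal_nonneg (μ := μ) (s := Set.univ)]
        have h2 : M * μ.real Kᶜ ≤ ε / 4 :=
          calc M * μ.real Kᶜ ≤ M * (ε / (4 * M)) := by gcongr
            _ = ε / 4 := by field_simp
        linarith

section LeftTranslation

variable {S : Type*} [Semigroup S] [MetricSpace S] [ContinuousMul S]

@[simp]
theorem lTrans_apply (a : S) (f : S →ᵇ ℂ) (x : S) : lTrans a f x = f (a * x) := rfl

noncomputable def lTransCLM (a : S) : (S →ᵇ ℂ) →L[ℂ] (S →ᵇ ℂ) :=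
  compContinuousCLM ℂ ℂ ⟨fun x => a * x, continuous_const.mul continuous_id⟩

@[simp]
theorem lTransCLM_apply (a : S) (f : S →ᵇ ℂ) : lTransCLM a f = lTrans a f := rfl

theorem continuous_lTrans {f : S →ᵇ ℂ} (hf : f ∈ LUC S) : Continuous fun a => lTrans a f := hf

theorem continuous_lTransL (f : LUC S) : Continuous fun a => lTransL a f :=
  (continuous_lTrans f.2).subtype_mk _

theorem lTrans_mem_LUC {f : S →ᵇ ℂ} (hf : f ∈ LUC S) (a : S) : lTrans a f ∈ LUC S :=
  (lTransL a ⟨f, hf⟩).2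

theorem exists_linearMap_LUC_coe_eq (Φ : LUC S →ₗ[ℂ] (S → ℂ)) (hcont : ∀ f, Continuous (Φ f))
    (hbdd : ∀ f x, ‖Φ f x‖ ≤ ‖f‖) (hcomm : ∀ a f x, Φ (lTransL a f) x = Φ f (a * x)) :
    ∃ P : LUC S →ₗ[ℂ] LUC S, ∀ f, ⇑(P f : S →ᵇ ℂ) = Φ f := by
  let Q : LUC S →L[ℂ] (S →ᵇ ℂ) := LinearMap.mkContinuous
    { toFun f := .ofNormedAddCommGroup (Φ f) (hcont f) ‖f‖ (hbdd f)
      map_add' f g := by ext x; exact congrFun (map_add Φ f g) x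
      map_smul' c f := by ext x; exact congrFun (map_smul Φ c f) x }
    1 fun f => (norm_ofNormedAddCommGroup_le _ (norm_nonneg f) (hbdd f)).trans_eq (one_mul _).symm
  have hmem (f : LUC S) : Q f ∈ LUC S := by
    have h : (fun a => lTrans a (Q f)) = fun a => Q (lTransL a f) := by
      funext a; ext x; exact (hcomm a f x).symm
    change Continuous fun a => lTrans a (Q f)
    rw [h]
    exact Q.continuous.comp (continuous_lTransL f)
  exact ⟨Q.toLinearMap.codRestrict (LUC S) hmem, fun f => rfl⟩

end LeftTranslation

section Convolution

variable {S : Type*} [Semigroup S] [MetricSpace S] [ContinuousMul S]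
  [MeasurableSpace S] [BorelSpace S] (π : Measure S) [IsProbabilityMeasure π]

noncomputable def convMeasure : (S →ᵇ ℂ) →L[ℂ] (S →ᵇ ℂ) :=
  LinearMap.mkContinuous
    { toFun f := .ofNormedAddCommGroup (fun x => ∫ y, lTrans x f y ∂π)
        (continuous_of_dominated
          (fun x => (lTrans x f).continuous.aestronglyMeasurable)
          (fun x => .of_forall fun y => f.norm_coe_le_norm (x * y)) (integrable_const ‖f‖)
          (.of_forall fun y => f.continuous.comp (continuous_id.mul continuous_const)))
        ‖f‖ (fun x => ((lTrans x f).norm_integral_le_norm π).trans (norm_compContinuous_le _ _))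
      map_add' f g := by
        ext x
        exact integral_add ((lTrans x f).integrable π) ((lTrans x g).integrable π)
      map_smul' c f := by
        ext x
        exact integral_smul c (lTrans x f) }
    1 (fun f => by simpa using (norm_ofNormedAddCommGroup_le _ (norm_nonneg f) _))

@[simp]
theorem convMeasure_apply (f : S →ᵇ ℂ) (x : S) : convMeasure π f x = ∫ y, f (x * y) ∂π := rfl

theorem norm_convMeasure_le : ‖convMeasure π‖ ≤ 1 :=
  LinearMap.mkContinuous_norm_le _ zero_le_one _

theorem commute_lTransCLM_convMeasure (a : S) : Commute (lTransCLM a) (convMeasure π) := by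
  ext f x
  simp [mul_assoc]

theorem lTrans_iterate_convMeasure (a : S) (k : ℕ) (f : S →ᵇ ℂ) :
    lTrans a ((convMeasure π)^[k] f) = (convMeasure π)^[k] (lTrans a f) :=
  Function.Commute.iterate_right
    (fun g => DFunLike.congr_fun (commute_lTransCLM_convMeasure π a).eq g) k f

theorem cesaroMean_convMeasure_lTrans (a : S) (n : ℕ) (f : S →ᵇ ℂ) :
    cesaroMean (convMeasure π) n (lTrans a f) = lTrans a (cesaroMean (convMeasure π) n f) :=
  DFunLike.congr_fun ((commute_lTransCLM_convMeasure π a).cesaroMean_right n).eq.symm f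

theorem norm_convMeasure_apply_sub_le (f : S →ᵇ ℂ) (u v : S) :
    ‖convMeasure π f u - convMeasure π f v‖ ≤ ‖lTrans u f - lTrans v f‖ := by
  change ‖∫ y, lTrans u f y ∂π - ∫ y, lTrans v f y ∂π‖ ≤ _
  rw [← integral_sub ((lTrans u f).integrable π) ((lTrans v f).integrable π)]
  exact (lTrans u f - lTrans v f).norm_integral_le_norm π

/-- The term `‖f u - f v‖` is only needed for `k = 0`: `S` need not have an identity. -/
theorem norm_iterate_convMeasure_apply_sub_le (k : ℕ) (f : S →ᵇ ℂ) (u v : S) :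
    ‖(convMeasure π)^[k] f u - (convMeasure π)^[k] f v‖ ≤
      ‖f u - f v‖ + ‖lTrans u f - lTrans v f‖ := by
  cases k with
  | zero => exact le_add_of_nonneg_right (norm_nonneg _)
  | succ k =>
    rw [Function.iterate_succ_apply']
    calc _ ≤ ‖lTrans u ((convMeasure π)^[k] f) - lTrans v ((convMeasure π)^[k] f)‖ :=
          norm_convMeasure_apply_sub_le π _ u v
      _ = ‖(convMeasure π)^[k] (lTrans u f - lTrans v f)‖ := by
          rw [lTrans_iterate_convMeasure, lTrans_iterate_convMeasure,
            ← FunLike.coe_pow_eq_iterate, map_sub]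
      _ ≤ ‖lTrans u f - lTrans v f‖ := norm_iterate_apply_le (norm_convMeasure_le π) k _
      _ ≤ _ := le_add_of_nonneg_left (norm_nonneg _)

theorem norm_cesaroMean_convMeasure_apply_sub_le (n : ℕ) (f : S →ᵇ ℂ) (u v : S) :
    ‖cesaroMean (convMeasure π) n f u - cesaroMean (convMeasure π) n f v‖ ≤
      ‖f u - f v‖ + ‖lTrans u f - lTrans v f‖ := by
  have h : cesaroMean (convMeasure π) n f u - cesaroMean (convMeasure π) n f v =
      birkhoffAverage ℂ (convMeasure π) (fun g : S →ᵇ ℂ => g u - g v) n f := by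
    rw [cesaroMean_apply]
    exact map_birkhoffAverage ℂ ℂ (evalCLM ℂ u - evalCLM ℂ v : (S →ᵇ ℂ) →L[ℂ] ℂ) _ id n f
  rw [h]
  exact norm_birkhoffAverage_le _ _ _ _ (by positivity)
    fun k => norm_iterate_convMeasure_apply_sub_le π k f u v

theorem equicontinuous_cesaroMean_convMeasure {f : S →ᵇ ℂ} (hf : f ∈ LUC S) :
    Equicontinuous fun n => ⇑(cesaroMean (convMeasure π) n f) := fun u => by
  refine Metric.equicontinuousAt_of_continuity_modulus
    (fun v => ‖f u - f v‖ + ‖lTrans u f - lTrans v f‖) ?_ _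
    (.of_forall fun v n => by
      rw [dist_eq_norm]; exact norm_cesaroMean_convMeasure_apply_sub_le π n f u v)
  simpa using ((tendsto_const_nhds (x := f u)).sub (f.continuous.tendsto u)).norm.add
    ((tendsto_const_nhds (x := lTrans u f)).sub ((continuous_lTrans hf).tendsto u)).norm

theorem exists_tendsto_cesaroMean_convMeasure :
    ∃ (l : Filter ℕ) (_ : l.NeBot) (Φ : LUC S →ₗ[ℂ] (S → ℂ)), l ≤ atTop ∧
      ∀ f : LUC S, Tendsto (fun n => ⇑(cesaroMean (convMeasure π) n f)) l (𝓝 (Φ f)) := by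
  let A (n : ℕ) : LUC S →ₗ[ℂ] (S → ℂ) := LinearMap.pi (fun x => (evalCLM ℂ x).toLinearMap) ∘ₗ
      (cesaroMean (convMeasure π) n).toLinearMap ∘ₗ (LUC S).subtype
  let U := Ultrafilter.of (atTop : Filter ℕ)
  have hA (n : ℕ) : ⇑(A n) ∈ Set.univ.pi fun f : LUC S => Set.univ.pi fun _ : S =>
      Metric.closedBall (0 : ℂ) ‖f‖ := fun f _ x _ =>
    mem_closedBall_zero_iff.2 <|
      (norm_coe_le_norm _ x).trans (norm_cesaroMean_apply_le (norm_convMeasure_le π) n f)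
  obtain ⟨Φ, -, hΦ⟩ := (isCompact_univ_pi fun f => isCompact_univ_pi fun _ =>
    isCompact_closedBall _ _).ultrafilter_le_nhds (U.map fun n => ⇑(A n))
    (le_principal_iff.2 (Ultrafilter.mem_map.2 (univ_mem' hA)))
  exact ⟨U, inferInstance, linearMapOfTendsto Φ A hΦ, Ultrafilter.of_le _,
    fun f => tendsto_pi_nhds.1 hΦ f⟩

variable {π} {l : Filter ℕ} {f : S →ᵇ ℂ} {φ : S → ℂ}

theorem norm_le_of_tendsto_cesaroMean [l.NeBot]
    (hφ : Tendsto (fun n => ⇑(cesaroMean (convMeasure π) n f)) l (𝓝 φ)) (x : S) :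
    ‖φ x‖ ≤ ‖f‖ :=
  le_of_tendsto (tendsto_pi_nhds.1 hφ x).norm <| .of_forall fun n =>
    (norm_coe_le_norm _ x).trans (norm_cesaroMean_apply_le (norm_convMeasure_le π) n f)

theorem continuous_of_tendsto_cesaroMean [l.NeBot]
    (hφ : Tendsto (fun n => ⇑(cesaroMean (convMeasure π) n f)) l (𝓝 φ)) (hf : f ∈ LUC S) :
    Continuous φ :=
  hφ.continuous_of_equicontinuous (equicontinuous_cesaroMean_convMeasure π hf)

theorem tendsto_cesaroMean_lTrans
    (hφ : Tendsto (fun n => ⇑(cesaroMean (convMeasure π) n f)) l (𝓝 φ)) (a : S) :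
    Tendsto (fun n => ⇑(cesaroMean (convMeasure π) n (lTrans a f))) l
      (𝓝 fun x => φ (a * x)) := by
  simp only [cesaroMean_convMeasure_lTrans]
  exact tendsto_pi_nhds.2 fun x => tendsto_pi_nhds.1 hφ (a * x)

theorem eq_of_tendsto_cesaroMean_of_convMeasure_eq [l.NeBot]
    (hφ : Tendsto (fun n => ⇑(cesaroMean (convMeasure π) n f)) l (𝓝 φ)) (hl : l ≤ atTop)
    (hfix : convMeasure π f = f) : φ = f :=
  tendsto_nhds_unique hφ <| tendsto_const_nhds.congr' <|
    ((eventually_ne_atTop 0).filter_mono hl).mono fun _ hn =>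
      congrArg DFunLike.coe (cesaroMean_apply_eq_self hfix hn).symm

theorem integral_comp_mul_of_tendsto_cesaroMean [l.NeBot]
    (hφ : Tendsto (fun n => ⇑(cesaroMean (convMeasure π) n f)) l (𝓝 φ))
    (hπ : IsTightMeasureSet {π}) (hf : f ∈ LUC S) (hl : l ≤ atTop) (x : S) :
    ∫ y, φ (x * y) ∂π = φ x := by
  have hx := tendsto_cesaroMean_lTrans hφ x
  have hf' := lTrans_mem_LUC hf x
  have hlim : Tendsto (fun n => ∫ y, cesaroMean (convMeasure π) n f (x * y) ∂π) l
      (𝓝 (∫ y, φ (x * y) ∂π)) := by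
    simpa [cesaroMean_convMeasure_lTrans] using tendsto_integral_of_tendstoUniformlyOn_isCompact hπ
      (fun n => (cesaroMean (convMeasure π) n (lTrans x f)).continuous.aestronglyMeasurable)
      (continuous_of_tendsto_cesaroMean hx hf').aestronglyMeasurable
      (fun n y => (norm_coe_le_norm _ y).trans
        (norm_cesaroMean_apply_le (norm_convMeasure_le π) n _))
      (norm_le_of_tendsto_cesaroMean hx)
      (fun K hK => (equicontinuous_cesaroMean_convMeasure π hf').tendstoUniformlyOn_of_tendsto
        hx hK)
  have hlim' : Tendsto (fun n => ∫ y, cesaroMean (convMeasure π) n f (x * y) ∂π) l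
      (𝓝 (φ x)) := by
    have hsub := ((continuous_eval_const x).tendsto 0).comp
      ((tendsto_cesaroMean_apply_sub (norm_convMeasure_le π) f).mono_left hl)
    simpa using (tendsto_pi_nhds.1 hφ x).add hsub
  exact tendsto_nhds_unique hlim hlim'

end Convolution

/-- **Existence of a contractive projection onto the harmonic functions.**
For a metric semigroup `S` and a tight Borel probability measure `π` on `S`, there is a
linear contractive projection `P : LUC S → LUC S` whose range is exactly the space
`H_π(S)` of `π`-harmonic functions in `LUC S`, and which commutes with left
translations. -/
theorem exists_projection_onto_harmonic_functions
    {S : Type*} [Semigroup S] [MetricSpace S] [ContinuousMul S]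
    [MeasurableSpace S] [BorelSpace S]
    (π : Measure S) [IsProbabilityMeasure π]
    (htight : ∀ ε : ℝ≥0∞, 0 < ε → ∃ K : Set S, IsCompact K ∧ π Kᶜ < ε) :
    ∃ P : LUC S →ₗ[ℂ] LUC S,
      (∀ f : LUC S, P (P f) = P f) ∧
      (∀ f : LUC S, ‖P f‖ ≤ ‖f‖) ∧
      (∀ f : LUC S, f ∈ LinearMap.range P ↔
        ∀ x : S, ∫ y, (f : S →ᵇ ℂ) (x * y) ∂π = (f : S →ᵇ ℂ) x) ∧
      (∀ (a : S) (f : LUC S), P (lTransL a f) = lTransL a (P f)) := by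
  have hπ : IsTightMeasureSet {π} :=
    isTightMeasureSet_iff_exists_isCompact_measure_compl_le.2 fun ε hε =>
      (htight ε hε).imp fun K hK => ⟨hK.1, by simpa using hK.2.le⟩
  obtain ⟨l, _, Φ, hl, hΦ⟩ := exists_tendsto_cesaroMean_convMeasure π
  have hcomm (a : S) (f : LUC S) (x : S) : Φ (lTransL a f) x = Φ f (a * x) :=
    tendsto_nhds_unique (tendsto_pi_nhds.1 (hΦ (lTransL a f)) x)
      (tendsto_pi_nhds.1 (tendsto_cesaroMean_lTrans (hΦ f) a) x)
  obtain ⟨P, hP⟩ := exists_linearMap_LUC_coe_eq Φ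
    (fun f => continuous_of_tendsto_cesaroMean (hΦ f) f.2)
    (fun f => norm_le_of_tendsto_cesaroMean (hΦ f)) hcomm
  have hharm (f : LUC S) (x : S) : ∫ y, (P f : S →ᵇ ℂ) (x * y) ∂π = (P f : S →ᵇ ℂ) x := by
    rw [hP]
    exact integral_comp_mul_of_tendsto_cesaroMean (hΦ f) hπ f.2 hl x
  have hfix (f : LUC S) (hf : ∀ x, ∫ y, (f : S →ᵇ ℂ) (x * y) ∂π = (f : S →ᵇ ℂ) x) : P f = f :=
    Subtype.ext <| DFunLike.coe_injective <|
      (hP f).trans (eq_of_tendsto_cesaroMean_of_convMeasure_eq (hΦ f) hl (ext hf))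
  refine ⟨P, fun f => hfix _ (hharm f), fun f => ?_,
    fun f => ⟨fun ⟨g, hg⟩ => hg ▸ hharm g, fun hf => ⟨f, hfix f hf⟩⟩, fun a f => ?_⟩
  · exact (norm_le (norm_nonneg _)).2 fun x =>
      (congrArg norm (congrFun (hP f) x)).trans_le (norm_le_of_tendsto_cesaroMean (hΦ f) x)
  · exact Subtype.ext <| DFunLike.coe_injective <| (hP _).trans <| funext fun x =>
      (hcomm a f x).trans (congrFun (hP f) (a * x)).symm
end
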